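/- arXiv:2003.12741 — 2 statements merged into one kernel-verified Lean document; each statement's English description precedes it below -/
import Mathlib

section
/- An invertible 2-isometry on a Hilbert space is a unitary operator (equivalently, an invertible operator S with ‖S²x‖² - 2‖Sx‖² + ‖x‖² = 0 for all x is an isometry). -/
/-! A 2-isometry `T` makes `n ↦ ‖Tⁿx‖²` an arithmetic progression of nonnegative reals, so its
common difference `‖Tx‖² - ‖x‖²` is nonnegative: `T` expands norms. The inverse of an invertible
2-isometry is again a 2-isometry, hence expands norms too, which forces equality. -/

section SecondDifference

variable {u : ℕ → ℝ}

theorem succ_sub_eq_of_second_diff_eq_zero (hu : ∀ n, u (n + 2) - 2 * u (n + 1) + u n = 0)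
    (n : ℕ) : u (n + 1) - u n = u 1 - u 0 := by
  induction n with
  | zero => rfl
  | succ n ih => linarith [hu n]

theorem eq_add_mul_of_second_diff_eq_zero (hu : ∀ n, u (n + 2) - 2 * u (n + 1) + u n = 0)
    (n : ℕ) : u n = u 0 + n * (u 1 - u 0) := by
  induction n with
  | zero => simp
  | succ n ih =>
    push_cast
    linarith [succ_sub_eq_of_second_diff_eq_zero hu n]

theorem le_of_second_diff_eq_zero_of_nonneg (hu : ∀ n, u (n + 2) - 2 * u (n + 1) + u n = 0)
    (h0 : ∀ n, 0 ≤ u n) : u 0 ≤ u 1 := by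
  by_contra! hlt
  have hd : 0 < u 0 - u 1 := by linarith
  obtain ⟨n, hn⟩ := exists_nat_gt (u 0 / (u 0 - u 1))
  rw [div_lt_iff₀ hd] at hn
  linarith [h0 n, eq_add_mul_of_second_diff_eq_zero hu n]

end SecondDifference

def IsTwoIsometry {E : Type*} [Norm E] (f : E → E) : Prop :=
  ∀ x, ‖f (f x)‖ ^ 2 - 2 * ‖f x‖ ^ 2 + ‖x‖ ^ 2 = 0

namespace IsTwoIsometry

variable {E : Type*} [SeminormedAddGroup E]

theorem norm_le_norm_apply {f : E → E} (hf : IsTwoIsometry f) (x : E) : ‖x‖ ≤ ‖f x‖ := by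
  have hu : ∀ n, ‖f^[n + 2] x‖ ^ 2 - 2 * ‖f^[n + 1] x‖ ^ 2 + ‖f^[n] x‖ ^ 2 = 0 := fun n => by
    simpa only [Function.iterate_succ_apply'] using hf (f^[n] x)
  have hsq : ‖x‖ ^ 2 ≤ ‖f x‖ ^ 2 :=
    le_of_second_diff_eq_zero_of_nonneg (u := fun n => ‖f^[n] x‖ ^ 2) hu fun _ => sq_nonneg _
  exact (pow_le_pow_iff_left₀ (norm_nonneg _) (norm_nonneg _) two_ne_zero).mp hsq

theorem symm {e : E ≃ E} (he : IsTwoIsometry e) : IsTwoIsometry e.symm := fun y => by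
  have h := he (e.symm (e.symm y))
  simp only [Equiv.apply_symm_apply] at h
  linarith

theorem norm_apply_eq {e : E ≃ E} (he : IsTwoIsometry e) (x : E) : ‖e x‖ = ‖x‖ :=
  le_antisymm (by simpa using he.symm.norm_le_norm_apply (e x)) (he.norm_le_norm_apply x)

end IsTwoIsometry

theorem invertible_two_isometry_is_isometry_general
    {K : Type*} [NormedAddCommGroup K] [InnerProductSpace ℂ K]
    (S : K →L[ℂ] K) (hinv : IsUnit S)
    (h2 : ∀ x : K, ‖S (S x)‖ ^ 2 - 2 * ‖S x‖ ^ 2 + ‖x‖ ^ 2 = 0) :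
    ∀ x : K, ‖S x‖ = ‖x‖ := by
  have hbij : Function.Bijective S :=
    (Module.End.isUnit_iff _).mp (hinv.map ContinuousLinearMap.toLinearMapRingHom)
  have hS : IsTwoIsometry (Equiv.ofBijective S hbij) := h2
  exact hS.norm_apply_eq

/-- An invertible 2-isometry on a Hilbert space is unitary: an invertible `S`
with `‖S²x‖² - 2‖Sx‖² + ‖x‖² = 0` for all `x` is an isometry. -/
theorem invertible_two_isometry_is_isometry
    {K : Type*} [NormedAddCommGroup K] [InnerProductSpace ℂ K] [CompleteSpace K]
    (S : K →L[ℂ] K) (hinv : IsUnit S)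
    (h2 : ∀ x : K, ‖S (S x)‖ ^ 2 - 2 * ‖S x‖ ^ 2 + ‖x‖ ^ 2 = 0) :
    ∀ x : K, ‖S x‖ = ‖x‖ :=
  invertible_two_isometry_is_isometry_general S hinv h2
end

section
/- If V is an isometry on K commuting with a bounded operator C on K, then the operator S = [[V, C],[0, V]] on K ⊕ K, written as S = W + Q with W = V ⊕ V isometric and Q(x,y) = (Cy, 0), satisfies Q² = 0 and WQ = QW; hence S is a 3-isometry. -/
/-! Since `W` and `Q` commute and `Q² = 0`, `(W + Q)ⁿ⁺¹ = Wⁿ (W + (n + 1) Q)`, so for an isometry `W`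
the map `n ↦ ‖(W + Q)ⁿ u‖² = ‖W u + n Q u‖²` is a quadratic polynomial in `n`; its third finite
difference, the defining expression of a 3-isometry, vanishes. -/

open ContinuousLinearMap

theorem Commute.add_pow_succ_of_mul_self_eq_zero {R : Type*} [Semiring R] {w q : R}
    (hwq : Commute w q) (hq : q * q = 0) (n : ℕ) :
    (w + q) ^ (n + 1) = w ^ n * (w + (n + 1) • q) := by
  induction n with
  | zero => simp
  | succ n ih =>
    have step : (w + (n + 1) • q) * (w + q) = w * (w + (n + 1 + 1) • q) := by
      simp only [add_mul, mul_add, smul_mul_assoc, mul_smul_comm, hq, hwq.eq, smul_zero,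
        add_zero, succ_nsmul _ (n + 1)]
      abel
    rw [pow_succ, ih, mul_assoc, step, ← mul_assoc, ← pow_succ]

theorem ContinuousLinearMap.norm_pow_apply_of_norm_apply {𝕜 E : Type*} [NormedField 𝕜]
    [SeminormedAddCommGroup E] [NormedSpace 𝕜 E] {W : E →L[𝕜] E} (hW : ∀ x, ‖W x‖ = ‖x‖)
    (n : ℕ) (x : E) : ‖(W ^ n) x‖ = ‖x‖ := by
  induction n with
  | zero => rfl
  | succ n ih => rw [pow_succ', mul_apply_eq_comp, hW, ih]

section

variable {𝕜 E : Type*} [RCLike 𝕜] [SeminormedAddCommGroup E] [InnerProductSpace 𝕜 E]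

def IsThreeIsometry (T : E →L[𝕜] E) : Prop :=
  ∀ u, ‖(T ^ 3) u‖ ^ 2 - 3 * ‖(T ^ 2) u‖ ^ 2 + 3 * ‖T u‖ ^ 2 - ‖u‖ ^ 2 = 0

theorem norm_add_nsmul_sq (a b : E) (n : ℕ) :
    ‖a + n • b‖ ^ 2 = ‖a‖ ^ 2 + 2 * n * RCLike.re (inner 𝕜 a b) + n ^ 2 * ‖b‖ ^ 2 := by
  rw [← Nat.cast_smul_eq_nsmul 𝕜, norm_add_sq (𝕜 := 𝕜), inner_smul_right, norm_smul,
    RCLike.norm_natCast, ← RCLike.ofReal_natCast, RCLike.re_ofReal_mul]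
  ring

theorem norm_add_pow_apply {W Q : E →L[𝕜] E} (hW : ∀ x, ‖W x‖ = ‖x‖)
    (hWQ : W ∘L Q = Q ∘L W) (hQ : Q ∘L Q = 0) (n : ℕ) (u : E) :
    ‖((W + Q) ^ n) u‖ = ‖W u + n • Q u‖ := by
  cases n with
  | zero => simp [hW]
  | succ n =>
    rw [Commute.add_pow_succ_of_mul_self_eq_zero hWQ hQ, mul_apply_eq_comp,
      norm_pow_apply_of_norm_apply hW]
    rfl

theorem isThreeIsometry_add {W Q : E →L[𝕜] E} (hW : ∀ x, ‖W x‖ = ‖x‖)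
    (hWQ : W ∘L Q = Q ∘L W) (hQ : Q ∘L Q = 0) : IsThreeIsometry (W + Q) := by
  intro u
  have h := norm_add_pow_apply hW hWQ hQ
  rw [h 3, h 2, ← pow_one (W + Q), h 1, ← hW u, norm_add_nsmul_sq (𝕜 := 𝕜),
    norm_add_nsmul_sq (𝕜 := 𝕜), norm_add_nsmul_sq (𝕜 := 𝕜)]
  push_cast
  ring

end

theorem foguel_type_three_isometry_general
    {K : Type*} [NormedAddCommGroup K] [InnerProductSpace ℂ K]
    (V C : K →L[ℂ] K)
    (hV : ∀ x : K, ‖V x‖ = ‖x‖)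
    (hVC : C ∘L V = V ∘L C)
    (S W Q : WithLp 2 (K × K) →L[ℂ] WithLp 2 (K × K))
    (hS : ∀ u : WithLp 2 (K × K),
      S u = (WithLp.equiv 2 (K × K)).symm (V u.fst + C u.snd, V u.snd))
    (hW : ∀ u : WithLp 2 (K × K),
      W u = (WithLp.equiv 2 (K × K)).symm (V u.fst, V u.snd))
    (hQ : ∀ u : WithLp 2 (K × K),
      Q u = (WithLp.equiv 2 (K × K)).symm (C u.snd, 0)) :
    S = W + Q ∧ Q ∘L Q = 0 ∧ W ∘L Q = Q ∘L W ∧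
    (∀ u : WithLp 2 (K × K),
      ‖(S ^ 3) u‖ ^ 2 - 3 * ‖(S ^ 2) u‖ ^ 2 + 3 * ‖S u‖ ^ 2 - ‖u‖ ^ 2 = 0) := by
  have hSWQ : S = W + Q := by
    ext u
    simp [hS, hW, hQ, ← WithLp.toLp_add]
  have hQQ : Q ∘L Q = 0 := by
    ext u
    simp [hQ]
  have hWQ : W ∘L Q = Q ∘L W := by
    have hCV : ∀ y, C (V y) = V (C y) := DFunLike.congr_fun hVC
    ext u
    simp only [comp_apply, hQ, hW, WithLp.equiv_symm_apply, WithLp.toLp_fst, WithLp.toLp_snd,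
      map_zero, hCV]
  have hW_isometry : ∀ u, ‖W u‖ = ‖u‖ := fun u ↦ by
    rw [← sq_eq_sq₀ (norm_nonneg _) (norm_nonneg _), WithLp.prod_norm_sq_eq_of_L2,
      WithLp.prod_norm_sq_eq_of_L2 u, hW]
    simp only [WithLp.equiv_symm_apply, WithLp.toLp_fst, WithLp.toLp_snd, hV]
  refine ⟨hSWQ, hQQ, hWQ, ?_⟩
  rw [hSWQ]
  exact isThreeIsometry_add hW_isometry hWQ hQQ

/-- If `V` is an isometry commuting with `C`, then `S = [[V, C],[0, V]]` on the
Hilbert direct sum `K ⊕ K`, written `S = W + Q` with `W = V ⊕ V` and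
`Q(x,y) = (Cy, 0)`, satisfies `Q² = 0` and `WQ = QW`; hence `S` is a 3-isometry. -/
theorem foguel_type_three_isometry
    {K : Type*} [NormedAddCommGroup K] [InnerProductSpace ℂ K] [CompleteSpace K]
    (V C : K →L[ℂ] K)
    (hV : ∀ x : K, ‖V x‖ = ‖x‖)
    (hVC : C ∘L V = V ∘L C)
    (S W Q : WithLp 2 (K × K) →L[ℂ] WithLp 2 (K × K))
    (hS : ∀ u : WithLp 2 (K × K),
      S u = (WithLp.equiv 2 (K × K)).symm (V u.fst + C u.snd, V u.snd))
    (hW : ∀ u : WithLp 2 (K × K),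
      W u = (WithLp.equiv 2 (K × K)).symm (V u.fst, V u.snd))
    (hQ : ∀ u : WithLp 2 (K × K),
      Q u = (WithLp.equiv 2 (K × K)).symm (C u.snd, 0)) :
    S = W + Q ∧ Q ∘L Q = 0 ∧ W ∘L Q = Q ∘L W ∧
    (∀ u : WithLp 2 (K × K),
      ‖(S ^ 3) u‖ ^ 2 - 3 * ‖(S ^ 2) u‖ ^ 2 + 3 * ‖S u‖ ^ 2 - ‖u‖ ^ 2 = 0) :=
  foguel_type_three_isometry_general V C hV hVC S W Q hS hW hQ
end
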